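/- arXiv:1909.07355 — 3 statements merged into one kernel-verified Lean document; each statement's English description precedes it below -/
import Mathlib

section
/- In the same geometric setting (null hypersurface H with null pair (L,L̄), spacelike foliation with unit normal T, slope ν = −g(L̄,T)), with ζ_A := (1/2) g(D_A L, L̄) (torsion) and ε_A := k_{NA} (the mixed component of the second fundamental form of the spacelike slice), the slope equation holds along H: ν⁻¹ ∇̸_A ν = −ε_A + ζ_A for every tangent direction A to the 2-sphere. -/
open scoped BigOperators

/-!
Both terms of the Leibniz rule `∇̸_A ν = −g(D_A L̄, T) − g(L̄, D_A T)` can be evaluated.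
By the Ricci equation only the `ζ_A L̄` part of `D_A L̄` sees `T`, and `g(L̄, T) = −ν`, so the
first term is `ν ζ_A`. Writing `L̄ = ν (T − N)` and using `g(T, D_A T) = 0`, the second term is
`ν g(N, D_A T) = −ν ε_A`. Dividing by `ν` gives the slope equation.
-/

section NullPair

variable {V : Type*} [AddCommGroup V] [Module ℝ V] (g : V →ₗ[ℝ] V →ₗ[ℝ] ℝ)

theorem bilin_sum_smul_add_smul_of_orthogonal {ι : Type*} [Fintype ι] {e : ι → V} {T : V}
    (horth : ∀ B, g (e B) T = 0) (c : ι → ℝ) (a : ℝ) (X : V) :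
    g ((∑ B, c B • e B) + a • X) T = a * g X T := by
  simp [map_sum, horth]

theorem bilin_Lbar_T_eq_neg {L Lbar T : V} {ν : ℝ} (hsymm : ∀ u v, g u v = g v u)
    (hT : T = (ν / 2) • L + (ν⁻¹ / 2) • Lbar) (hLLbar : g L Lbar = -2)
    (hLbarLbar : g Lbar Lbar = 0) :
    g Lbar T = -ν := by
  rw [hT, map_add, map_smul, map_smul, smul_eq_mul, smul_eq_mul, hsymm Lbar L, hLLbar,
    hLbarLbar]
  ring

end NullPair

theorem Lbar_eq_smul_sub {V : Type*} [AddCommGroup V] [Module ℝ V] {L Lbar T N : V} {ν : ℝ}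
    (hν : ν ≠ 0) (hT : T = (ν / 2) • L + (ν⁻¹ / 2) • Lbar)
    (hN : N = (ν / 2) • L - (ν⁻¹ / 2) • Lbar) :
    Lbar = ν • (T - N) := by
  rw [hT, hN, add_sub_sub_cancel, ← add_smul, add_halves, smul_smul, mul_inv_cancel₀ hν,
    one_smul]

theorem stmt_2_general {V : Type*} [AddCommGroup V] [Module ℝ V]
    (g : V →ₗ[ℝ] V →ₗ[ℝ] ℝ) (hsymm : ∀ u v, g u v = g v u)
    (L Lbar T N : V) (e : Fin 2 → V)
    (ν : ℝ) (hν : ν ≠ 0)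
    (hT : T = (ν/2) • L + (ν⁻¹/2) • Lbar)
    (hN : N = (ν/2) • L - (ν⁻¹/2) • Lbar)
    (hLLbar : g L Lbar = -2) (hLbarLbar : g Lbar Lbar = 0)
    (horthTe : ∀ B, g (e B) T = 0)
    (DLbar DT : Fin 2 → V)
    (χbar : Fin 2 → Fin 2 → ℝ) (ζ ε dν : Fin 2 → ℝ)
    (hRicci : ∀ A, DLbar A = (∑ B, χbar A B • e B) + ζ A • Lbar)
    (hε : ∀ A, ε A = - g (DT A) N)
    (hTunit : ∀ A, g T (DT A) = 0)
    (hdν : ∀ A, dν A = - g (DLbar A) T - g Lbar (DT A)) :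
    ∀ A, ν⁻¹ * dν A = - ε A + ζ A := by
  intro A
  have hDLbarT : g (DLbar A) T = -(ν * ζ A) := by
    rw [hRicci A, bilin_sum_smul_add_smul_of_orthogonal g horthTe,
      bilin_Lbar_T_eq_neg g hsymm hT hLLbar hLbarLbar, mul_neg, mul_comm]
  have hLbarDT : g Lbar (DT A) = ν * ε A := by
    rw [Lbar_eq_smul_sub hν hT hN, map_smul, map_sub, LinearMap.smul_apply, LinearMap.sub_apply,
      hTunit A, hε A, hsymm N, smul_eq_mul, zero_sub]
  rw [hdν A, hDLbarT, hLbarDT, neg_neg, ← mul_sub, inv_mul_cancel_left₀ hν]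
  ring

/-- slope equation, pointwise tangent-space formulation.
With the null pair `(L,L̄)` on a null hypersurface, spacelike foliation normal `T`,
slope `ν = −g(L̄,T)`, torsion `ζ_A = (1/2) g(D_A L, L̄)` and `ε_A = k_{NA} = −g(D_A T, N)`,
the slope equation `ν⁻¹ ∇̸_A ν = −ε_A + ζ_A` holds for every tangent direction `A`.
The covariant derivatives `D_A L`, `D_A L̄`, `D_A T` are encoded as vectors, with the
Ricci equation `D_A L̄ = χ̄_{AB} e_B + ζ_A L̄` and the Leibniz rule for
`∇̸_A ν = −g(D_A L̄, T) − g(L̄, D_A T)` as hypotheses. -/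
theorem stmt_2 {V : Type*} [AddCommGroup V] [Module ℝ V]
    (g : V →ₗ[ℝ] V →ₗ[ℝ] ℝ) (hsymm : ∀ u v, g u v = g v u)
    (L Lbar T N : V) (e : Fin 2 → V)
    (ν : ℝ) (hν : ν ≠ 0)
    (hT : T = (ν/2) • L + (ν⁻¹/2) • Lbar)
    (hN : N = (ν/2) • L - (ν⁻¹/2) • Lbar)
    (hLLbar : g L Lbar = -2) (hLbarLbar : g Lbar Lbar = 0)
    (horthTe : ∀ B, g (e B) T = 0)
    (DL DLbar DT : Fin 2 → V)
    (χbar : Fin 2 → Fin 2 → ℝ) (ζ ε dν : Fin 2 → ℝ)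
    (hζ : ∀ A, ζ A = (1/2) * g (DL A) Lbar)
    (hRicci : ∀ A, DLbar A = (∑ B, χbar A B • e B) + ζ A • Lbar)
    (hε : ∀ A, ε A = - g (DT A) N)
    (hTunit : ∀ A, g T (DT A) = 0)
    (hdν : ∀ A, dν A = - g (DLbar A) T - g Lbar (DT A)) :
    ∀ A, ν⁻¹ * dν A = - ε A + ζ A :=
  stmt_2_general g hsymm L Lbar T N e ν hν hT hN hLLbar hLbarLbar horthTe DLbar DT χbar ζ ε dν
    hRicci hε hTunit hdν
end

section
/- In the same setting, with n the lapse of the spacelike foliation (satisfying D_T T = −n⁻¹∇n), δ = k_{NN}, L = ν⁻¹(T+N) and L̄ = ν(T−N), the slope ν satisfies the transport equation along the null generator: L(ν) = −n⁻¹ N(n) − δ. -/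
open scoped BigOperators

/-- transport equation for the slope, pointwise formulation.
With `n` the lapse of the spacelike foliation (`D_T T = −n⁻¹∇n`), `δ = k_{NN}`,
`L = ν⁻¹(T+N)`, `L̄ = ν(T−N)`, the slope satisfies `L(ν) = −n⁻¹ N(n) − δ` along
the null generator.  The derivatives are encoded as vectors/scalars:
`DLLbar = D_L L̄` (tangent to the spheres by the Ricci equations), `DTT = D_T T`,
`DNT = D_N T`, `D_L T = ν⁻¹ (D_T T + D_N T)`, `gradn = ∇n` with `g(N,∇n) = N(n)`,
`g(N, D_N T) = −δ`, and the Leibniz rule `L(ν) = −g(D_L L̄, T) − g(L̄, D_L T)`. -/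
theorem stmt_3 {V : Type*} [AddCommGroup V] [Module ℝ V]
    (g : V →ₗ[ℝ] V →ₗ[ℝ] ℝ) (hsymm : ∀ u v, g u v = g v u)
    (L Lbar T N : V) (e : Fin 2 → V)
    (ν n δ Nn Lν : ℝ) (hν : ν ≠ 0)
    (hL : L = ν⁻¹ • (T + N)) (hLbar : Lbar = ν • (T - N))
    (DTT DNT DLT DLLbar gradn : V) (ηb : Fin 2 → ℝ)
    (hRicci : DLLbar = (2 * ηb 0) • e 0 + (2 * ηb 1) • e 1)
    (horthTe : ∀ A, g (e A) T = 0)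
    (hacc : DTT = -(n⁻¹) • gradn)
    (hgradN : g N gradn = Nn) (hgradT : g T gradn = 0)
    (hkNN : g N DNT = -δ)
    (hTNunit : g T DNT = 0)
    (hDLT : DLT = ν⁻¹ • (DTT + DNT))
    (hLν : Lν = - g DLLbar T - g Lbar DLT) :
    Lν = -(n⁻¹ * Nn) - δ := by
  subst hLν hRicci hLbar hDLT hacc
  simp only [map_add, map_smul, map_sub, LinearMap.add_apply, LinearMap.smul_apply,
    LinearMap.sub_apply, smul_eq_mul, horthTe, hgradN, hgradT, hkNN, hTNunit]
  field_simp
  ring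
end

section
/- Let R be an algebraic curvature tensor on a 4-dimensional Lorentzian vector space with vanishing Ricci trace (R_{μν} = 0), and let (T, N, e₁, e₂) be an orthonormal frame with T timelike. Then R_{1TN1} (R_{1NT2} + R_{1TN2}) + R_{2TN2} (R_{2TN1} + R_{2NT1}) = 0 and R_{1TN1} R_{1NT1} − R_{1TN2} R_{1NT2} + R_{2TN1} R_{2NT1} − R_{2TN2} R_{2NT2} = 0, where indices 1, 2, T, N denote contraction with e₁, e₂, T, N respectively. -/
open scoped BigOperators

namespace Stmt14

/-- Minkowski metric components in the orthonormal frame `(T, N, e₁, e₂)`,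
index `0 = T` (timelike), `1 = N`, `2 = e₁`, `3 = e₂`. -/
noncomputable def eta : Fin 4 → ℝ := fun i => if i = 0 then -1 else 1

/-- Let `R` be an algebraic curvature tensor on a 4-dimensional
Lorentzian vector space with vanishing Ricci trace, and `(T,N,e₁,e₂)` an orthonormal
frame with `T` timelike.  Then
`R_{1TN1}(R_{1NT2} + R_{1TN2}) + R_{2TN2}(R_{2TN1} + R_{2NT1}) = 0` and
`R_{1TN1}R_{1NT1} − R_{1TN2}R_{1NT2} + R_{2TN1}R_{2NT1} − R_{2TN2}R_{2NT2} = 0`.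
(Indices: `T = 0`, `N = 1`, `e₁ = 2`, `e₂ = 3`.) -/
theorem stmt_14 (R : Fin 4 → Fin 4 → Fin 4 → Fin 4 → ℝ)
    (hanti1 : ∀ a b c d, R a b c d = - R b a c d)
    (hanti2 : ∀ a b c d, R a b c d = - R a b d c)
    (hpair : ∀ a b c d, R a b c d = R c d a b)
    (hbianchi : ∀ a b c d, R a b c d + R a c d b + R a d b c = 0)
    (hricciflat : ∀ b d, ∑ a, eta a * R a b a d = 0) :
    R 2 0 1 2 * (R 2 1 0 3 + R 2 0 1 3) + R 3 0 1 3 * (R 3 0 1 2 + R 3 1 0 2) = 0 ∧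
    R 2 0 1 2 * R 2 1 0 2 - R 2 0 1 3 * R 2 1 0 3
      + R 3 0 1 2 * R 3 1 0 2 - R 3 0 1 3 * R 3 1 0 3 = 0 := by
  -- Ricci trace with (b,d) = (0,1):
  have hr01 := hricciflat 0 1
  have hr10 := hricciflat 1 0
  rw [Fin.sum_univ_four] at hr01 hr10
  simp only [eta, if_pos rfl, if_true, one_mul, neg_mul, if_neg (show (1:Fin 4) ≠ 0 by decide),
    if_neg (show (2:Fin 4) ≠ 0 by decide), if_neg (show (3:Fin 4) ≠ 0 by decide)] at hr01 hr10
  -- diagonal-vanishing facts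
  have h0001 : R 0 0 0 1 = 0 := by have := hanti1 0 0 0 1; linarith
  have h1011 : R 1 0 1 1 = 0 := by have := hanti2 1 0 1 1; linarith
  have h0100 : R 0 1 0 0 = 0 := by have := hanti2 0 1 0 0; linarith
  have h1110 : R 1 1 1 0 = 0 := by have := hanti1 1 1 1 0; linarith
  -- From Ricci: R 3 0 1 3 = - R 2 0 1 2
  have h1 : R 3 0 1 3 = - R 2 0 1 2 := by
    have a1 := hanti2 2 0 2 1
    have a2 := hanti2 3 0 3 1
    linarith [hr01]
  -- From Ricci: R 3 1 0 3 = - R 2 1 0 2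
  have h2 : R 3 1 0 3 = - R 2 1 0 2 := by
    have a1 := hanti2 2 1 2 0
    have a2 := hanti2 3 1 3 0
    linarith [hr10]
  -- From pair symmetry + antisymmetry: R 3 0 1 2 = R 2 1 0 3
  have h3 : R 3 0 1 2 = R 2 1 0 3 := by
    have a1 := hpair 3 0 1 2      -- R3012 = R1230
    have a2 := hanti2 1 2 3 0     -- R1230 = -R1203
    have a3 := hpair 1 2 0 3      -- R1203 = R0312
    have a4 := hpair 2 1 0 3      -- R2103 = R0321
    have a5 := hanti2 0 3 2 1     -- R0321 = -R0312
    linarith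
  -- From pair symmetry + antisymmetry: R 3 1 0 2 = R 2 0 1 3
  have h4 : R 3 1 0 2 = R 2 0 1 3 := by
    have a1 := hpair 3 1 0 2      -- R3102 = R0231
    have a2 := hanti2 0 2 3 1     -- R0231 = -R0213
    have a3 := hpair 2 0 1 3      -- R2013 = R1320
    have a4 := hanti2 1 3 2 0     -- R1320 = -R1302
    have a5 := hpair 1 3 0 2      -- R1302 = R0213
    linarith
  constructor
  · rw [h1, h3, h4]; ring
  · rw [h1, h2, h3, h4]; ring

end Stmt14
end
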